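/- Let n be a positive integer and let A, B, C, D be n×n positive definite complex matrices with b₁I ≤ A ≤ a₁I, b₂I ≤ B ≤ a₂I, b₃I ≤ C ≤ a₃I, b₄I ≤ D ≤ a₄I for scalars 0 < bᵢ < aᵢ (i = 1,…,4), and let α ∈ (0,1). With f(t) = t^α, set μ = a₁a₂b₁b₂((b₃b₄a₁⁻¹a₂⁻¹)^α − (a₃a₄b₁⁻¹b₂⁻¹)^α)/(b₁b₂b₃b₄ − a₁a₂a₃a₄), ω = α(b₁b₂b₃b₄ (a₃a₄b₁⁻¹b₂⁻¹)^α − a₁a₂a₃a₄ (b₃b₄a₁⁻¹a₂⁻¹)^α) / ((1−α) a₁a₂b₁b₂ ((b₃b₄a₁⁻¹a₂⁻¹)^α − (a₃a₄b₁⁻¹b₂⁻¹)^α)), and ν = (1−α)ωμ/α. Then (A∘B) #_α (C∘D) − (A #_α C) ∘ (B #_α D) ≤ ((1−α)(μ/α)^{α/(α−1)} − ν) a₁a₂ I. -/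

import Mathlib

open scoped ComplexOrder

noncomputable section

/-- The real power `M ^ r` of a (positive definite) matrix, via the continuous functional
calculus. -/
noncomputable def mPow {n : Type} [Fintype n] [DecidableEq n]
    (M : Matrix n n ℂ) (r : ℝ) : Matrix n n ℂ :=
  cfc (fun t : ℝ => t ^ r) M

/-- The matrix mean `A σ B = A^{1/2} f(A^{-1/2} B A^{-1/2}) A^{1/2}` associated with the
representing function `f`. -/
noncomputable def mMean {n : Type} [Fintype n] [DecidableEq n]
    (f : ℝ → ℝ) (A B : Matrix n n ℂ) : Matrix n n ℂ :=
  mPow A (1/2) * cfc f (mPow A (-(1/2)) * B * mPow A (-(1/2))) * mPow A (1/2)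

/-- The weighted geometric mean `X #_α Y = X^{1/2} (X^{-1/2} Y X^{-1/2})^α X^{1/2}`. -/
noncomputable def mGeoMean {n : Type} [Fintype n] [DecidableEq n]
    (α : ℝ) (A B : Matrix n n ℂ) : Matrix n n ℂ :=
  mMean (fun t : ℝ => t ^ α) A B

/-- `f : (0,∞) → (0,∞)` is operator monotone on positive definite complex matrices of every
finite size: `X ≤ Y` implies `f(X) ≤ f(Y)` (in the sense that the differences are positive
semidefinite). -/
def IsMatrixMonotone (f : ℝ → ℝ) : Prop :=
  ∀ (m : ℕ) (X Y : Matrix (Fin m) (Fin m) ℂ), X.PosDef → Y.PosDef →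
    (Y - X).PosSemidef → (cfc f Y - cfc f X).PosSemidef

/-!
Write `P = A ∘ B`, `Q = C ∘ D`, `x = b₃b₄/(a₁a₂)`, `y = a₃a₄/(b₁b₂)`. The constants are those
of the secant of `t ↦ t ^ α` on `[x, y]`: `μ` is its slope and `ν` its intercept. Since
`b₁b₂ ≤ P ≤ a₁a₂` and `b₃b₄ ≤ Q ≤ a₃a₄`, we get `x P ≤ Q ≤ y P`, so the spectrum of
`P^{-1/2} Q P^{-1/2}` lies in `[x, y]`, and likewise for `A ⊗ B`, `C ⊗ D`.

On `[x, y]` the concave function `t ^ α` lies above its secant `μ t + ν` and below the parallel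
tangent line `μ t + ν + K`, `K = (1 - α) (μ / α) ^ (α / (α - 1)) - ν`. Through the functional
calculus the tangent bound gives `P #_α Q ≤ μ Q + (ν + K) P`, and the secant bound gives
`μ (C ⊗ D) + ν (A ⊗ B) ≤ (A ⊗ B) #_α (C ⊗ D) = (A #_α C) ⊗ (B #_α D)`. The Hadamard product is
the principal submatrix of the Kronecker product on the diagonal indices, so
`μ Q + ν P ≤ (A #_α C) ∘ (B #_α D)`. Subtracting, the difference is at most `K P ≤ K a₁a₂`.
-/

open scoped MatrixOrder Kronecker
open Matrix Unitary

lemma ConcaveOn.secant_le {s : Set ℝ} {f : ℝ → ℝ} (hf : ConcaveOn ℝ s f) {x y t : ℝ}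
    (hx : x ∈ s) (hy : y ∈ s) (hxy : x < y) (ht : t ∈ Set.Icc x y) :
    f x + (f y - f x) / (y - x) * (t - x) ≤ f t := by
  have hyx : 0 < y - x := sub_pos.2 hxy
  have key := hf.2 hx hy (div_nonneg (sub_nonneg.2 ht.2) hyx.le)
    (div_nonneg (sub_nonneg.2 ht.1) hyx.le) (by field_simp; ring)
  have ht' : (y - t) / (y - x) * x + (t - x) / (y - x) * y = t := by field_simp; ring
  simp only [smul_eq_mul, ht'] at key
  refine le_of_eq_of_le ?_ key
  field_simp
  ring

lemma Real.rpow_le_mul_add {α μ : ℝ} (hα₀ : 0 < α) (hα₁ : α < 1) (hμ : 0 < μ) {t : ℝ}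
    (ht : 0 ≤ t) :
    t ^ α ≤ μ * t + (1 - α) * (μ / α) ^ (α / (α - 1)) := by
  have hμα : 0 < μ / α := div_pos hμ hα₀
  have hα1 : α - 1 ≠ 0 := by linarith
  -- weighted AM-GM at the point `s` where the tangent line of slope `μ` touches `t ^ α`
  set s := (μ / α) ^ (1 / (α - 1))
  have hs : 0 < s := Real.rpow_pos_of_pos hμα _
  have hs_pow : s ^ (α - 1) = μ / α := by
    rw [← Real.rpow_mul hμα.le, one_div_mul_cancel hα1, Real.rpow_one]
  have hs_mul : μ / α * s = (μ / α) ^ (α / (α - 1)) := by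
    rw [show α / (α - 1) = 1 + 1 / (α - 1) by field_simp; ring, Real.rpow_add hμα,
      Real.rpow_one]
  have hamgm := Real.geom_mean_le_arith_mean2_weighted hα₀.le (by linarith : 0 ≤ 1 - α) ht
    hs.le (by ring)
  have hlhs : t ^ α * s ^ (1 - α) * (μ / α) = t ^ α := by
    rw [← hs_pow, mul_assoc, ← Real.rpow_add hs, show 1 - α + (α - 1) = 0 by ring,
      Real.rpow_zero, mul_one]
  calc t ^ α = t ^ α * s ^ (1 - α) * (μ / α) := hlhs.symm
    _ ≤ (α * t + (1 - α) * s) * (μ / α) := mul_le_mul_of_nonneg_right hamgm hμα.le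
    _ = μ * t + (1 - α) * (μ / α * s) := by field_simp
    _ = μ * t + (1 - α) * (μ / α) ^ (α / (α - 1)) := by rw [hs_mul]

lemma rpow_between_secant_and_tangent {α x y μ ν : ℝ} (hα : α ∈ Set.Ioo (0 : ℝ) 1)
    (hx : 0 < x) (hxy : x < y) (hμ : μ = (y ^ α - x ^ α) / (y - x)) (hν : ν = x ^ α - μ * x) :
    ν ≤ (1 - α) * (μ / α) ^ (α / (α - 1)) ∧ ∀ t ∈ Set.Icc x y,
      μ * t + ν ≤ t ^ α ∧ t ^ α ≤ μ * t + (1 - α) * (μ / α) ^ (α / (α - 1)) := by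
  have hμpos : 0 < μ :=
    hμ ▸ div_pos (sub_pos.2 (Real.rpow_lt_rpow hx.le hxy hα.1)) (sub_pos.2 hxy)
  have hbounds (t : ℝ) (ht : t ∈ Set.Icc x y) :
      μ * t + ν ≤ t ^ α ∧ t ^ α ≤ μ * t + (1 - α) * (μ / α) ^ (α / (α - 1)) := by
    refine ⟨?_, Real.rpow_le_mul_add hα.1 hα.2 hμpos (hx.le.trans ht.1)⟩
    have := (Real.concaveOn_rpow hα.1.le hα.2.le).secant_le hx.le (hx.trans hxy).le hxy ht
    rw [hν, hμ]
    linarith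
  obtain ⟨hsecant, htangent⟩ := hbounds x ⟨le_rfl, hxy.le⟩
  exact ⟨by linarith, hbounds⟩

lemma mu_nu_eq_secant {a₁ b₁ a₂ b₂ a₃ b₃ a₄ b₄ α μ ω ν : ℝ}
    (ha₁ : 0 < a₁) (ha₂ : 0 < a₂) (hb₁ : 0 < b₁) (hb₂ : 0 < b₂) (hα : α ∈ Set.Ioo (0 : ℝ) 1)
    (hx : 0 < b₃ * b₄ / (a₁ * a₂)) (hxy : b₃ * b₄ / (a₁ * a₂) < a₃ * a₄ / (b₁ * b₂))
    (hμ : μ = a₁ * a₂ * b₁ * b₂ *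
        ((b₃ * b₄ * a₁⁻¹ * a₂⁻¹) ^ α - (a₃ * a₄ * b₁⁻¹ * b₂⁻¹) ^ α) /
      (b₁ * b₂ * b₃ * b₄ - a₁ * a₂ * a₃ * a₄))
    (hω : ω = α * (b₁ * b₂ * b₃ * b₄ * (a₃ * a₄ * b₁⁻¹ * b₂⁻¹) ^ α -
        a₁ * a₂ * a₃ * a₄ * (b₃ * b₄ * a₁⁻¹ * a₂⁻¹) ^ α) /
      ((1 - α) * (a₁ * a₂ * b₁ * b₂) *
        ((b₃ * b₄ * a₁⁻¹ * a₂⁻¹) ^ α - (a₃ * a₄ * b₁⁻¹ * b₂⁻¹) ^ α)))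
    (hν : ν = (1 - α) * ω * μ / α) :
    μ = ((a₃ * a₄ / (b₁ * b₂)) ^ α - (b₃ * b₄ / (a₁ * a₂)) ^ α) /
        (a₃ * a₄ / (b₁ * b₂) - b₃ * b₄ / (a₁ * a₂)) ∧
      ν = (b₃ * b₄ / (a₁ * a₂)) ^ α - μ * (b₃ * b₄ / (a₁ * a₂)) := by
  set x := b₃ * b₄ / (a₁ * a₂)
  set y := a₃ * a₄ / (b₁ * b₂)
  have hx' : b₃ * b₄ * a₁⁻¹ * a₂⁻¹ = x := by ring
  have hy' : a₃ * a₄ * b₁⁻¹ * b₂⁻¹ = y := by ring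
  have hbx : b₁ * b₂ * b₃ * b₄ = a₁ * a₂ * b₁ * b₂ * x := by simp only [x]; field_simp
  have hay : a₁ * a₂ * a₃ * a₄ = a₁ * a₂ * b₁ * b₂ * y := by simp only [y]; field_simp
  have hxy' : x - y ≠ 0 := (sub_neg.2 hxy).ne
  have hyx : y - x ≠ 0 := (sub_pos.2 hxy).ne'
  have hpow : x ^ α - y ^ α ≠ 0 := (sub_neg.2 (Real.rpow_lt_rpow hx.le hxy hα.1)).ne
  have hα₀ : α ≠ 0 := hα.1.ne'
  have hα₁ : 1 - α ≠ 0 := (sub_pos.2 hα.2).ne'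
  rw [hx', hy', hbx, hay] at hμ hω
  have hμ' : μ = (y ^ α - x ^ α) / (y - x) := by
    rw [hμ]
    field_simp
    ring
  refine ⟨hμ', ?_⟩
  rw [hν, hω, hμ']
  field_simp
  ring

lemma mem_Icc_smul_of_mem_Icc {E : Type*} [AddCommMonoid E] [PartialOrder E] [Module ℝ E]
    [PosSMulMono ℝ E] {e R S : E} {a b a' b' : ℝ} (ha : 0 < a) (hb : 0 < b) (hb' : 0 ≤ b')
    (ha' : 0 ≤ a') (hR : R ∈ Set.Icc (b • e) (a • e)) (hS : S ∈ Set.Icc (b' • e) (a' • e)) :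
    S ∈ Set.Icc ((b' / a) • R) ((a' / b) • R) := by
  constructor
  · calc (b' / a) • R ≤ (b' / a) • a • e := smul_le_smul_of_nonneg_left hR.2 (by positivity)
      _ = b' • e := by rw [smul_smul, div_mul_cancel₀ _ ha.ne']
      _ ≤ S := hS.1
  · calc S ≤ a' • e := hS.2
      _ = (a' / b) • b • e := by rw [smul_smul, div_mul_cancel₀ _ hb.ne']
      _ ≤ (a' / b) • R := smul_le_smul_of_nonneg_left hR.1 (by positivity)

namespace Matrix

variable {m : Type} [Fintype m] [DecidableEq m]

lemma continuousOn_spectrum (R : Matrix m m ℂ) (f : ℝ → ℝ) : ContinuousOn f (spectrum ℝ R) := by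
  rw [continuousOn_iff_continuous_domRestrict]
  fun_prop

end Matrix

section UnitaryConjDiagonal

variable {m : Type} [Fintype m] [DecidableEq m] (U : unitary (Matrix m m ℂ)) (d : m → ℝ)

lemma isSelfAdjoint_conj_diagonal :
    IsSelfAdjoint (conjStarAlgAut ℂ _ U (diagonal (RCLike.ofReal ∘ d))) := by
  rw [IsSelfAdjoint, ← map_star, star_eq_conjTranspose, diagonal_conjTranspose]
  congr 2
  ext i
  simp

lemma mem_spectrum_conj_diagonal (i : m) :
    d i ∈ spectrum ℝ (conjStarAlgAut ℂ _ U (diagonal (RCLike.ofReal ∘ d))) := by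
  rw [conjStarAlgAut_apply, Unitary.spectrum_star_right_conjugate,
    ← spectrum.algebraMap_mem_iff ℂ, spectrum_diagonal]
  exact ⟨i, rfl⟩

/-- The functional calculus of `U * diagonal d * star U` read off through this particular
diagonalization; by uniqueness of the continuous functional calculus it is `cfc`
(`cfc_conj_diagonal`). -/
noncomputable def conjDiagonalStarAlgHom :
    C(spectrum ℝ (conjStarAlgAut ℂ _ U (diagonal (RCLike.ofReal ∘ d))), ℝ) →⋆ₐ[ℝ]
      Matrix m m ℂ where
  toFun g := conjStarAlgAut ℂ _ U <|
    diagonal (RCLike.ofReal ∘ g ∘ fun i ↦ ⟨d i, mem_spectrum_conj_diagonal U d i⟩)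
  map_zero' := by
    rw [← map_zero (conjStarAlgAut ℂ _ U), ← diagonal_zero]
    rfl
  map_one' := by
    rw [← map_one (conjStarAlgAut ℂ _ U), ← diagonal_one]
    rfl
  map_mul' f g := by
    rw [← map_mul, diagonal_mul_diagonal]
    congr 2 with i
    exact RCLike.ofReal_mul _ _
  map_add' f g := by
    rw [← map_add, diagonal_add]
    congr 2 with i
    exact RCLike.ofReal_add _ _
  commutes' r := by
    have hr : diagonal (RCLike.ofReal ∘ (algebraMap ℝ C(spectrum ℝ
        (conjStarAlgAut ℂ _ U (diagonal (RCLike.ofReal ∘ d))), ℝ) r) ∘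
          fun i ↦ ⟨d i, mem_spectrum_conj_diagonal U d i⟩) = algebraMap ℝ (Matrix m m ℂ) r := by
      rw [algebraMap_eq_diagonal]
      rfl
    rw [hr, conjStarAlgAut_apply, ← Algebra.commutes, mul_assoc, ← coe_star, coe_mul_star_self,
      mul_one]
  map_star' f := by
    rw [star_trivial f, ← map_star, star_eq_conjTranspose, diagonal_conjTranspose]
    congr 2 with i
    simp

lemma cfc_conj_diagonal (f : ℝ → ℝ) :
    cfc f (conjStarAlgAut ℂ _ U (diagonal (RCLike.ofReal ∘ d))) =
      conjStarAlgAut ℂ _ U (diagonal (RCLike.ofReal ∘ f ∘ d)) := by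
  set a := conjStarAlgAut ℂ _ U (diagonal (RCLike.ofReal ∘ d))
  have ha : IsSelfAdjoint a := isSelfAdjoint_conj_diagonal U d
  have : FiniteDimensional ℝ C(spectrum ℝ a, ℝ) :=
    .of_injective (ContinuousMap.coeFnLinearMap ℝ (M := ℝ)) DFunLike.coe_injective
  have hid : conjDiagonalStarAlgHom U d (.restrict (spectrum ℝ a) (.id ℝ)) = a := rfl
  rw [cfc_apply f a ha (continuousOn_spectrum a f),
    cfcHom_eq_of_continuous_of_map_id ha _
      (LinearMap.continuous_of_finiteDimensional (conjDiagonalStarAlgHom U d).toLinearMap) hid]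
  rfl

end UnitaryConjDiagonal

section Kronecker

variable {m p : Type} [Fintype m] [DecidableEq m] [Fintype p] [DecidableEq p]

def unitaryKronecker (U : unitary (Matrix m m ℂ)) (V : unitary (Matrix p p ℂ)) :
    unitary (Matrix (m × p) (m × p) ℂ) :=
  ⟨(U : Matrix m m ℂ) ⊗ₖ (V : Matrix p p ℂ), kronecker_mem_unitary U.2 V.2⟩

lemma conjStarAlgAut_kronecker (U : unitary (Matrix m m ℂ)) (V : unitary (Matrix p p ℂ))
    (M : Matrix m m ℂ) (N : Matrix p p ℂ) :
    conjStarAlgAut ℂ (Matrix (m × p) (m × p) ℂ) (unitaryKronecker U V) (M ⊗ₖ N) =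
      conjStarAlgAut ℂ _ U M ⊗ₖ conjStarAlgAut ℂ _ V N := by
  simp only [conjStarAlgAut_apply, unitaryKronecker, star_eq_conjTranspose,
    conjTranspose_kronecker, mul_kronecker_mul]

lemma cfc_kronecker {X : Matrix m m ℂ} {Y : Matrix p p ℂ} (hX : X.IsHermitian)
    (hY : Y.IsHermitian) (f : ℝ → ℝ)
    (hf : ∀ s ∈ spectrum ℝ X, ∀ t ∈ spectrum ℝ Y, f (s * t) = f s * f t) :
    cfc f (X ⊗ₖ Y) = cfc f X ⊗ₖ cfc f Y := by
  have hXY : X ⊗ₖ Y = conjStarAlgAut ℂ (Matrix (m × p) (m × p) ℂ)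
      (unitaryKronecker hX.eigenvectorUnitary hY.eigenvectorUnitary)
      (diagonal (RCLike.ofReal ∘ fun q ↦ hX.eigenvalues q.1 * hY.eigenvalues q.2)) := by
    conv_lhs => rw [hX.spectral_theorem, hY.spectral_theorem]
    rw [← conjStarAlgAut_kronecker, diagonal_kronecker_diagonal]
    simp [Function.comp_def]
  rw [hXY, cfc_conj_diagonal, hX.cfc_eq, hY.cfc_eq, IsHermitian.cfc, IsHermitian.cfc,
    ← conjStarAlgAut_kronecker, diagonal_kronecker_diagonal]
  congr 2 with q
  simp [hf _ (hX.eigenvalues_mem_spectrum_real q.1) _ (hY.eigenvalues_mem_spectrum_real q.2)]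

end Kronecker

namespace Matrix

section Order

variable {m p : Type}

lemma submatrix_le_submatrix {X Y : Matrix p p ℂ} (hXY : X ≤ Y) (e : m → p) :
    X.submatrix e e ≤ Y.submatrix e e :=
  (le_iff.1 hXY).submatrix e

lemma hadamard_eq_submatrix_kronecker (A B : Matrix m m ℂ) :
    A ⊙ B = (A ⊗ₖ B).submatrix (fun i ↦ (i, i)) (fun i ↦ (i, i)) :=
  rfl

lemma smul_one_kronecker_smul_one [DecidableEq m] [DecidableEq p] (a b : ℝ) :
    (a • 1 : Matrix m m ℂ) ⊗ₖ (b • 1 : Matrix p p ℂ) = (a * b) • 1 := by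
  rw [smul_kronecker, kronecker_smul, one_kronecker_one, smul_smul]

variable [Fintype m] [Fintype p]

lemma kronecker_le_kronecker {A A' : Matrix m m ℂ} {B B' : Matrix p p ℂ} (hA : 0 ≤ A)
    (hAA' : A ≤ A') (hB : 0 ≤ B) (hBB' : B ≤ B') : A ⊗ₖ B ≤ A' ⊗ₖ B' := by
  have hdecomp : A' ⊗ₖ B' - A ⊗ₖ B = (A' - A) ⊗ₖ B' + A ⊗ₖ (B' - B) := by
    ext ⟨i, k⟩ ⟨j, l⟩
    simp only [sub_apply, add_apply, kronecker_apply]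
    ring
  rw [le_iff, hdecomp]
  exact ((sub_nonneg.2 hAA').posSemidef.kronecker (hB.trans hBB').posSemidef).add
    (hA.posSemidef.kronecker (sub_nonneg.2 hBB').posSemidef)

variable [DecidableEq m] [DecidableEq p]

lemma kronecker_mem_Icc {A : Matrix m m ℂ} {B : Matrix p p ℂ} {a b a' b' : ℝ}
    (hb : 0 ≤ b) (hb' : 0 ≤ b') (hA : A ∈ Set.Icc (b • 1) (a • 1))
    (hB : B ∈ Set.Icc (b' • 1) (a' • 1)) :
    A ⊗ₖ B ∈ Set.Icc ((b * b') • 1) ((a * a') • 1) := by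
  have hb1 : (0 : Matrix m m ℂ) ≤ b • 1 := smul_nonneg hb zero_le_one
  have hb'1 : (0 : Matrix p p ℂ) ≤ b' • 1 := smul_nonneg hb' zero_le_one
  rw [← smul_one_kronecker_smul_one, ← smul_one_kronecker_smul_one]
  exact ⟨kronecker_le_kronecker hb1 hA.1 hb'1 hB.1,
    kronecker_le_kronecker (hb1.trans hA.1) hA.2 (hb'1.trans hB.1) hB.2⟩

lemma hadamard_mem_Icc {A B : Matrix m m ℂ} {a b a' b' : ℝ}
    (hb : 0 ≤ b) (hb' : 0 ≤ b') (hA : A ∈ Set.Icc (b • 1) (a • 1))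
    (hB : B ∈ Set.Icc (b' • 1) (a' • 1)) :
    A ⊙ B ∈ Set.Icc ((b * b') • 1) ((a * a') • 1) := by
  have hdiag (c : ℝ) : (c • 1 : Matrix m m ℂ) =
      ((c • 1 : Matrix (m × m) (m × m) ℂ)).submatrix (fun i ↦ (i, i)) (fun i ↦ (i, i)) := by
    ext i j
    by_cases hij : i = j <;> simp [hij]
  have hAB := kronecker_mem_Icc hb hb' hA hB
  rw [hadamard_eq_submatrix_kronecker, hdiag, hdiag]
  exact ⟨submatrix_le_submatrix hAB.1 _, submatrix_le_submatrix hAB.2 _⟩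

end Order

section Power

variable {m : Type} [Fintype m] [DecidableEq m] {R S : Matrix m m ℂ}

lemma isHermitian_mPow (R : Matrix m m ℂ) (r : ℝ) : (mPow R r).IsHermitian :=
  cfc_predicate _ R

lemma mPow_zero (hR : R.IsHermitian) : mPow R 0 = 1 := by
  simp only [mPow, Real.rpow_zero]
  exact cfc_const_one ℝ R hR

lemma mPow_one (hR : R.IsHermitian) : mPow R 1 = R := by
  simp only [mPow, Real.rpow_one]
  exact cfc_id' ℝ R hR

lemma PosDef.mPow_mul_mPow (hR : R.PosDef) (r s : ℝ) :
    mPow R r * mPow R s = mPow R (r + s) := by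
  have hpos : ∀ t ∈ spectrum ℝ R, 0 < t := fun _ ht ↦
    (isStrictlyPositive_iff_posDef.mpr hR).spectrum_pos ht
  rw [mPow, mPow, mPow, ← cfc_mul _ _ R (continuousOn_spectrum R _) (continuousOn_spectrum R _)]
  exact cfc_congr fun t ht ↦ (Real.rpow_add (hpos t ht) r s).symm

lemma PosDef.mPow_half_mul_mPow_neg_half (hR : R.PosDef) :
    mPow R (1 / 2) * mPow R (-(1 / 2)) = 1 := by
  rw [hR.mPow_mul_mPow, add_neg_cancel, mPow_zero hR.1]

lemma PosDef.mPow_neg_half_mul_mPow_half (hR : R.PosDef) :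
    mPow R (-(1 / 2)) * mPow R (1 / 2) = 1 := by
  rw [hR.mPow_mul_mPow, neg_add_cancel, mPow_zero hR.1]

lemma PosDef.mPow_half_mul_mPow_half (hR : R.PosDef) : mPow R (1 / 2) * mPow R (1 / 2) = R := by
  rw [hR.mPow_mul_mPow, add_halves, mPow_one hR.1]

lemma PosDef.mPow_neg_half_conj_self (hR : R.PosDef) :
    mPow R (-(1 / 2)) * R * mPow R (-(1 / 2)) = 1 := by
  nth_rw 2 [← hR.mPow_half_mul_mPow_half]
  rw [← mul_assoc, hR.mPow_neg_half_mul_mPow_half, one_mul, hR.mPow_half_mul_mPow_neg_half]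

lemma PosSemidef.mPow_kronecker {p : Type} [Fintype p] [DecidableEq p] {T : Matrix p p ℂ}
    (hR : R.PosSemidef) (hT : T.PosSemidef) (r : ℝ) :
    mPow (R ⊗ₖ T) r = mPow R r ⊗ₖ mPow T r :=
  cfc_kronecker hR.1 hT.1 _ fun _ hs _ ht ↦ Real.mul_rpow
    (spectrum_nonneg_of_nonneg hR.nonneg hs) (spectrum_nonneg_of_nonneg hT.nonneg ht)

lemma IsHermitian.mPow_conj (hS : S.IsHermitian) (R : Matrix m m ℂ) (r : ℝ) :
    (mPow R r * S * mPow R r).IsHermitian := by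
  simpa [(isHermitian_mPow R r).eq] using isHermitian_conjTranspose_mul_mul (mPow R r) hS

lemma PosSemidef.mPow_conj (hS : S.PosSemidef) (R : Matrix m m ℂ) (r : ℝ) :
    (mPow R r * S * mPow R r).PosSemidef := by
  simpa [(isHermitian_mPow R r).eq] using hS.conjTranspose_mul_mul_same (mPow R r)

lemma mPow_conj_le_mPow_conj {X Y : Matrix m m ℂ} (hXY : X ≤ Y) (R : Matrix m m ℂ) (r : ℝ) :
    mPow R r * X * mPow R r ≤ mPow R r * Y * mPow R r := by
  simpa [star_eq_conjTranspose, (isHermitian_mPow R r).eq] using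
    star_left_conjugate_le_conjugate hXY (mPow R r)

end Power

section Mean

variable {m : Type} [Fintype m] [DecidableEq m] {R S : Matrix m m ℂ}

lemma PosDef.mMean_affine (hR : R.PosDef) (hS : S.IsHermitian) (μ ν : ℝ) :
    mMean (fun t ↦ μ * t + ν) R S = μ • S + ν • R := by
  set N := mPow R (-(1 / 2))
  set P := mPow R (1 / 2)
  have hZ : IsSelfAdjoint (N * S * N) := hS.mPow_conj R _
  have hcfc : cfc (fun t ↦ μ * t + ν) (N * S * N) = μ • (N * S * N) + ν • 1 := by
    rw [cfc_add .., cfc_const_mul .., cfc_id' .., cfc_const .., Algebra.algebraMap_eq_smul_one]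
  calc mMean (fun t ↦ μ * t + ν) R S
      = μ • ((P * N) * S * (N * P)) + ν • (P * P) := by
        rw [show mMean _ R S = P * cfc _ (N * S * N) * P from rfl, hcfc]
        simp only [mul_add, add_mul, mul_smul_comm, smul_mul_assoc, mul_one, mul_assoc]
    _ = μ • S + ν • R := by
        rw [hR.mPow_half_mul_mPow_neg_half, hR.mPow_neg_half_mul_mPow_half,
          hR.mPow_half_mul_mPow_half, one_mul, mul_one]

lemma PosDef.mMean_le_mMean (hR : R.PosDef) (hS : S.IsHermitian) {h h' : ℝ}
    (hlo : h • R ≤ S) (hhi : S ≤ h' • R) {f g : ℝ → ℝ} (hfg : ∀ t ∈ Set.Icc h h', f t ≤ g t) :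
    mMean f R S ≤ mMean g R S := by
  set N := mPow R (-(1 / 2))
  have hZ : IsSelfAdjoint (N * S * N) := hS.mPow_conj R _
  have hNRN : ∀ c : ℝ, N * (c • R) * N = algebraMap ℝ _ c := fun c ↦ by
    rw [mul_smul_comm, smul_mul_assoc, hR.mPow_neg_half_conj_self,
      Algebra.algebraMap_eq_smul_one]
  have hZlo : algebraMap ℝ _ h ≤ N * S * N := hNRN h ▸ mPow_conj_le_mPow_conj hlo R _
  have hZhi : N * S * N ≤ algebraMap ℝ _ h' := hNRN h' ▸ mPow_conj_le_mPow_conj hhi R _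
  have hcfc : cfc f (N * S * N) ≤ cfc g (N * S * N) :=
    cfc_mono (fun t ht ↦ hfg t ⟨(algebraMap_le_iff_le_spectrum hZ).1 hZlo t ht,
      (le_algebraMap_iff_spectrum_le hZ).1 hZhi t ht⟩)
      (continuousOn_spectrum _ _) (continuousOn_spectrum _ _)
  exact mPow_conj_le_mPow_conj hcfc R _

lemma PosDef.mMean_le_mMean_of_mem_Icc (hR : R.PosDef) (hS : S.IsHermitian) {a b a' b' : ℝ}
    (ha : 0 < a) (hb : 0 < b) (hb' : 0 ≤ b') (ha' : 0 ≤ a') (hRb : R ∈ Set.Icc (b • 1) (a • 1))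
    (hSb : S ∈ Set.Icc (b' • 1) (a' • 1)) {f g : ℝ → ℝ}
    (hfg : ∀ t ∈ Set.Icc (b' / a) (a' / b), f t ≤ g t) :
    mMean f R S ≤ mMean g R S :=
  have hSR := mem_Icc_smul_of_mem_Icc ha hb hb' ha' hRb hSb
  hR.mMean_le_mMean hS hSR.1 hSR.2 hfg

lemma PosSemidef.mMean_kronecker {p : Type} [Fintype p] [DecidableEq p] {A C : Matrix m m ℂ}
    {B D : Matrix p p ℂ} (hA : A.PosSemidef) (hB : B.PosSemidef) (hC : C.PosSemidef)
    (hD : D.PosSemidef) (f : ℝ → ℝ) (hf : ∀ s t, 0 ≤ s → 0 ≤ t → f (s * t) = f s * f t) :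
    mMean f (A ⊗ₖ B) (C ⊗ₖ D) = mMean f A C ⊗ₖ mMean f B D := by
  have hZ₁ := hC.mPow_conj A (-(1 / 2))
  have hZ₂ := hD.mPow_conj B (-(1 / 2))
  rw [mMean, mMean, mMean, hA.mPow_kronecker hB, hA.mPow_kronecker hB, ← mul_kronecker_mul,
    ← mul_kronecker_mul, cfc_kronecker hZ₁.1 hZ₂.1 f fun s hs t ht ↦
      hf s t (spectrum_nonneg_of_nonneg hZ₁.nonneg hs) (spectrum_nonneg_of_nonneg hZ₂.nonneg ht),
    ← mul_kronecker_mul, ← mul_kronecker_mul]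

lemma PosSemidef.mGeoMean_kronecker {p : Type} [Fintype p] [DecidableEq p] {A C : Matrix m m ℂ}
    {B D : Matrix p p ℂ} (hA : A.PosSemidef) (hB : B.PosSemidef) (hC : C.PosSemidef)
    (hD : D.PosSemidef) (α : ℝ) :
    mGeoMean α (A ⊗ₖ B) (C ⊗ₖ D) = mGeoMean α A C ⊗ₖ mGeoMean α B D :=
  hA.mMean_kronecker hB hC hD _ fun _ _ hs ht ↦ Real.mul_rpow hs ht

end Mean

end Matrix

theorem stmt_18_general (n : ℕ) (A B C D : Matrix (Fin n) (Fin n) ℂ)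
    (hA : A.PosDef) (hB : B.PosDef) (hC : C.PosDef) (hD : D.PosDef)
    (a₁ b₁ a₂ b₂ a₃ b₃ a₄ b₄ : ℝ)
    (hb₁ : 0 < b₁) (hba₁ : b₁ < a₁) (hb₂ : 0 < b₂) (hba₂ : b₂ < a₂)
    (hb₃ : 0 < b₃) (hba₃ : b₃ < a₃) (hb₄ : 0 < b₄) (hba₄ : b₄ < a₄)
    (hA₁ : (A - b₁ • 1).PosSemidef) (hA₂ : (a₁ • 1 - A).PosSemidef)
    (hB₁ : (B - b₂ • 1).PosSemidef) (hB₂ : (a₂ • 1 - B).PosSemidef)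
    (hC₁ : (C - b₃ • 1).PosSemidef) (hC₂ : (a₃ • 1 - C).PosSemidef)
    (hD₁ : (D - b₄ • 1).PosSemidef) (hD₂ : (a₄ • 1 - D).PosSemidef)
    (α : ℝ) (hα : α ∈ Set.Ioo (0 : ℝ) 1)
    (μ ω ν : ℝ)
    (hμ : μ = a₁ * a₂ * b₁ * b₂ *
        ((b₃ * b₄ * a₁⁻¹ * a₂⁻¹) ^ α - (a₃ * a₄ * b₁⁻¹ * b₂⁻¹) ^ α) /
      (b₁ * b₂ * b₃ * b₄ - a₁ * a₂ * a₃ * a₄))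
    (hω : ω = α * (b₁ * b₂ * b₃ * b₄ * (a₃ * a₄ * b₁⁻¹ * b₂⁻¹) ^ α -
        a₁ * a₂ * a₃ * a₄ * (b₃ * b₄ * a₁⁻¹ * a₂⁻¹) ^ α) /
      ((1 - α) * (a₁ * a₂ * b₁ * b₂) *
        ((b₃ * b₄ * a₁⁻¹ * a₂⁻¹) ^ α - (a₃ * a₄ * b₁⁻¹ * b₂⁻¹) ^ α)))
    (hν : ν = (1 - α) * ω * μ / α) :
    ((((1 - α) * (μ / α) ^ (α / (α - 1)) - ν) * (a₁ * a₂)) • (1 : Matrix (Fin n) (Fin n) ℂ) -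
        (mGeoMean α (Matrix.hadamard A B) (Matrix.hadamard C D) -
          Matrix.hadamard (mGeoMean α A C) (mGeoMean α B D))).PosSemidef := by
  have ha₁ := hb₁.trans hba₁
  have ha₂ := hb₂.trans hba₂
  have ha₃ := hb₃.trans hba₃
  have ha₄ := hb₄.trans hba₄
  have hx : 0 < b₃ * b₄ / (a₁ * a₂) := by positivity
  have hxy : b₃ * b₄ / (a₁ * a₂) < a₃ * a₄ / (b₁ * b₂) :=
    div_lt_div₀ (mul_lt_mul'' hba₃ hba₄ hb₃.le hb₄.le) (mul_lt_mul'' hba₁ hba₂ hb₁.le hb₂.le).le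
      (by positivity) (by positivity)
  obtain ⟨hμ', hν'⟩ := mu_nu_eq_secant ha₁ ha₂ hb₁ hb₂ hα hx hxy hμ hω hν
  obtain ⟨hK, hbounds⟩ := rpow_between_secant_and_tangent hα hx hxy hμ' hν'
  set K := (1 - α) * (μ / α) ^ (α / (α - 1)) - ν
  have hP := hadamard_mem_Icc hb₁.le hb₂.le ⟨hA₁, hA₂⟩ ⟨hB₁, hB₂⟩
  have hupper : mGeoMean α (A ⊙ B) (C ⊙ D) ≤ μ • (C ⊙ D) + (ν + K) • (A ⊙ B) := by
    rw [← (hA.hadamard hB).mMean_affine (hC.hadamard hD).1, add_sub_cancel]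
    exact (hA.hadamard hB).mMean_le_mMean_of_mem_Icc (hC.hadamard hD).1 (by positivity)
      (by positivity) (by positivity) (by positivity) hP
      (hadamard_mem_Icc hb₃.le hb₄.le ⟨hC₁, hC₂⟩ ⟨hD₁, hD₂⟩) fun t ht ↦ (hbounds t ht).2
  have hlower : μ • (C ⊙ D) + ν • (A ⊙ B) ≤ mGeoMean α A C ⊙ mGeoMean α B D := by
    have hkron : μ • (C ⊗ₖ D) + ν • (A ⊗ₖ B) ≤ mGeoMean α A C ⊗ₖ mGeoMean α B D := by
      rw [← (hA.kronecker hB).mMean_affine (hC.kronecker hD).1,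
        ← hA.posSemidef.mGeoMean_kronecker hB.posSemidef hC.posSemidef hD.posSemidef]
      exact (hA.kronecker hB).mMean_le_mMean_of_mem_Icc (hC.kronecker hD).1 (by positivity)
        (by positivity) (by positivity) (by positivity)
        (kronecker_mem_Icc hb₁.le hb₂.le ⟨hA₁, hA₂⟩ ⟨hB₁, hB₂⟩)
        (kronecker_mem_Icc hb₃.le hb₄.le ⟨hC₁, hC₂⟩ ⟨hD₁, hD₂⟩) fun t ht ↦ (hbounds t ht).1
    exact submatrix_le_submatrix hkron fun i ↦ (i, i)
  rw [← le_iff]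
  calc mGeoMean α (A ⊙ B) (C ⊙ D) - mGeoMean α A C ⊙ mGeoMean α B D
      ≤ (μ • (C ⊙ D) + (ν + K) • (A ⊙ B)) - (μ • (C ⊙ D) + ν • (A ⊙ B)) :=
        sub_le_sub hupper hlower
    _ = K • (A ⊙ B) := by module
    _ ≤ K • (a₁ * a₂) • 1 := smul_le_smul_of_nonneg_left hP.2 (sub_nonneg.2 hK)
    _ = (K * (a₁ * a₂)) • 1 := smul_smul _ _ _

/-- **Theorem 4.1 (iv)**: additive reverse inequality for the Hadamard product and the weighted
geometric mean `f(t) = t^α`. -/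
theorem stmt_18 (n : ℕ) (hn : 0 < n) (A B C D : Matrix (Fin n) (Fin n) ℂ)
    (hA : A.PosDef) (hB : B.PosDef) (hC : C.PosDef) (hD : D.PosDef)
    (a₁ b₁ a₂ b₂ a₃ b₃ a₄ b₄ : ℝ)
    (hb₁ : 0 < b₁) (hba₁ : b₁ < a₁) (hb₂ : 0 < b₂) (hba₂ : b₂ < a₂)
    (hb₃ : 0 < b₃) (hba₃ : b₃ < a₃) (hb₄ : 0 < b₄) (hba₄ : b₄ < a₄)
    (hA₁ : (A - b₁ • 1).PosSemidef) (hA₂ : (a₁ • 1 - A).PosSemidef)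
    (hB₁ : (B - b₂ • 1).PosSemidef) (hB₂ : (a₂ • 1 - B).PosSemidef)
    (hC₁ : (C - b₃ • 1).PosSemidef) (hC₂ : (a₃ • 1 - C).PosSemidef)
    (hD₁ : (D - b₄ • 1).PosSemidef) (hD₂ : (a₄ • 1 - D).PosSemidef)
    (α : ℝ) (hα : α ∈ Set.Ioo (0 : ℝ) 1)
    (μ ω ν : ℝ)
    (hμ : μ = a₁ * a₂ * b₁ * b₂ *
        ((b₃ * b₄ * a₁⁻¹ * a₂⁻¹) ^ α - (a₃ * a₄ * b₁⁻¹ * b₂⁻¹) ^ α) /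
      (b₁ * b₂ * b₃ * b₄ - a₁ * a₂ * a₃ * a₄))
    (hω : ω = α * (b₁ * b₂ * b₃ * b₄ * (a₃ * a₄ * b₁⁻¹ * b₂⁻¹) ^ α -
        a₁ * a₂ * a₃ * a₄ * (b₃ * b₄ * a₁⁻¹ * a₂⁻¹) ^ α) /
      ((1 - α) * (a₁ * a₂ * b₁ * b₂) *
        ((b₃ * b₄ * a₁⁻¹ * a₂⁻¹) ^ α - (a₃ * a₄ * b₁⁻¹ * b₂⁻¹) ^ α)))
    (hν : ν = (1 - α) * ω * μ / α) :
    ((((1 - α) * (μ / α) ^ (α / (α - 1)) - ν) * (a₁ * a₂)) • (1 : Matrix (Fin n) (Fin n) ℂ) -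
        (mGeoMean α (Matrix.hadamard A B) (Matrix.hadamard C D) -
          Matrix.hadamard (mGeoMean α A C) (mGeoMean α B D))).PosSemidef :=
  stmt_18_general n A B C D hA hB hC hD a₁ b₁ a₂ b₂ a₃ b₃ a₄ b₄ hb₁ hba₁ hb₂ hba₂ hb₃ hba₃ hb₄ hba₄
    hA₁ hA₂ hB₁ hB₂ hC₁ hC₂ hD₁ hD₂ α hα μ ω ν hμ hω hν
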